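/- Let A be a finite-dimensional k-algebra with d = dim_k A and m ≥ 0 an integer. Let P• be a minimal complex of finitely generated projective A-modules concentrated in degrees 0,…,m, and suppose dim_k H^i(P•) ≤ c for all i. Then for each i in [0,m], dim_k P^i ≤ c·(d + d² + ⋯ + d^{m−i+1}). -/

import Mathlib

open CategoryTheory

/-- The radical of a module `M` over `A`: the submodule `rad(A)·M`. -/
def modRad (A M : Type*) [Ring A] [AddCommGroup M] [Module A M] : Submodule A M :=
  Submodule.span A {y | ∃ a ∈ Ideal.jacobson (⊥ : Ideal A), ∃ x : M, a • x = y}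

/-- The dimension of an `A`-module over the base field `k`. -/
noncomputable def kdim (k : Type*) [Field k] (A : Type*) [Ring A] [Algebra k A]
    (M : Type*) [AddCommGroup M] [Module A M] : ℕ :=
  Module.finrank k (RestrictScalars k A M)

/-!
By Nakayama's lemma a finitely generated module `M` is generated by lifts of a `k`-basis of its
top `M / rad M`, so `dim M ≤ d · dim (M / rad M)`. Minimality makes `Xⁱ / rad Xⁱ` a quotient of
`Xⁱ / Im dⁱ⁻¹`, which sits in the exact sequence `0 → Hⁱ(X) → Xⁱ / Im dⁱ⁻¹ → Xⁱ⁺¹`. Hence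
`dim Xⁱ ≤ d · (c + dim Xⁱ⁺¹)`, and descending induction from `Xᵐ⁺¹ = 0` gives the bound.
-/

section Radical

variable {A M N : Type*} [Ring A] [AddCommGroup M] [Module A M] [AddCommGroup N] [Module A N]

lemma modRad_le_jacobson : modRad A M ≤ Module.jacobson A M := by
  refine Submodule.span_le.2 ?_
  rintro _ ⟨a, ha, x, rfl⟩
  rw [Ideal.jacobson_bot] at ha
  exact Ring.jacobson_smul_top_le A M (Submodule.smul_mem_smul ha Submodule.mem_top)

lemma Submodule.eq_top_of_sup_jacobson_eq_top [Module.Finite A M] {S : Submodule A M}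
    (h : S ⊔ Module.jacobson A M = ⊤) : S = ⊤ := by
  by_contra hS
  obtain ⟨C, hC, hSC⟩ := (eq_top_or_exists_le_coatom S).resolve_left hS
  exact hC.1 (top_le_iff.1 (h ▸ sup_le hSC (sInf_le hC)))

lemma LinearMap.surjective_of_surjective_mkQ_modRad_comp [Module.Finite A M] (f : N →ₗ[A] M)
    (hf : Function.Surjective ((modRad A M).mkQ ∘ₗ f)) : Function.Surjective f := by
  rw [← LinearMap.range_eq_top, LinearMap.range_comp, Submodule.map_mkQ_eq_top, sup_comm] at hf
  rw [← LinearMap.range_eq_top]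
  exact Submodule.eq_top_of_sup_jacobson_eq_top
    (top_le_iff.1 (hf ▸ sup_le_sup_left modRad_le_jacobson _))

end Radical

section KDim

variable (k : Type*) [Field k] {A : Type*} [Ring A] [Algebra k A]
  {L M N : Type*} [AddCommGroup L] [Module A L] [AddCommGroup M] [Module A M]
  [AddCommGroup N] [Module A N]

/- `RestrictScalars k A M` gets an additive monoid structure from `M` both directly and through
its additive group, and the two are not reducibly defeq. `kdim` uses the first one, while the
linear algebra of `k`-vector spaces needs the second, so we make the second the default. -/
@[reducible] def RestrictScalars.addCommMonoidOfAddCommGroup :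
    AddCommMonoid (RestrictScalars k A M) :=
  AddCommGroup.toAddCommMonoid

@[reducible] def RestrictScalars.moduleOfAddCommGroup :
    @Module k (RestrictScalars k A M) _ AddCommGroup.toAddCommMonoid :=
  RestrictScalars.module k A M

attribute [local instance] RestrictScalars.addCommMonoidOfAddCommGroup
  RestrictScalars.moduleOfAddCommGroup

lemma kdim_eq_finrank_restrictScalars : kdim k A M = Module.finrank k (RestrictScalars k A M) :=
  rfl

def RestrictScalars.map (f : M →ₗ[A] N) :
    RestrictScalars k A M →ₗ[k] RestrictScalars k A N where
  toFun := f
  map_add' := f.map_add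
  map_smul' c := f.map_smul (algebraMap k A c)

variable (A M) in
def RestrictScalars.linearEquiv [Module k M] [IsScalarTower k A M] :
    RestrictScalars k A M ≃ₗ[k] M :=
  (RestrictScalars.addEquiv k A M).toLinearEquiv fun c x => by
    rw [RestrictScalars.addEquiv_map_smul, algebraMap_smul]

variable (A) in
lemma kdim_eq_finrank [Module k M] [IsScalarTower k A M] : kdim k A M = Module.finrank k M :=
  (RestrictScalars.linearEquiv k A M).finrank_eq

lemma kdim_of_subsingleton [Subsingleton M] : kdim k A M = 0 :=
  have : Subsingleton (RestrictScalars k A M) := ‹Subsingleton M›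
  Module.finrank_zero_of_subsingleton

variable [FiniteDimensional k A]

instance RestrictScalars.finiteDimensional [Module.Finite A M] :
    FiniteDimensional k (RestrictScalars k A M) := by
  obtain ⟨n, φ, hφ⟩ := Module.Finite.exists_fin' A M
  have := Module.Finite.equiv (RestrictScalars.linearEquiv k A (Fin n → A)).symm
  exact Module.Finite.of_surjective (RestrictScalars.map k φ) hφ

lemma kdim_le_of_surjective [Module.Finite A M] (f : M →ₗ[A] N) (hf : Function.Surjective f) :
    kdim k A N ≤ kdim k A M := by
  have := (RestrictScalars.map k f).finrank_range_le
  rwa [LinearMap.range_eq_top_of_surjective (RestrictScalars.map k f) hf, finrank_top] at this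

lemma kdim_le_add_of_exact [Module.Finite A M] [Module.Finite A N] {f : L →ₗ[A] M}
    {g : M →ₗ[A] N} (hf : Function.Injective f) (hfg : Function.Exact f g) :
    kdim k A M ≤ kdim k A L + kdim k A N := by
  have hker : LinearMap.ker (RestrictScalars.map k g) =
      LinearMap.range (RestrictScalars.map k f) :=
    hfg.linearMap_ker_eq (f := RestrictScalars.map k f) (g := RestrictScalars.map k g)
  have hrank := (RestrictScalars.map k g).finrank_range_add_finrank_ker
  rw [hker, LinearMap.finrank_range_of_inj (f := RestrictScalars.map k f) hf] at hrank
  have hrange := Submodule.finrank_le (LinearMap.range (RestrictScalars.map k g))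
  simp only [kdim_eq_finrank_restrictScalars]
  omega

lemma kdim_le_finrank_mul_kdim_quotient_modRad [Module.Finite A M] :
    kdim k A M ≤ Module.finrank k A * kdim k A (M ⧸ modRad A M) := by
  let b := Module.finBasis k (RestrictScalars k A (M ⧸ modRad A M))
  choose v hv using fun i => (modRad A M).mkQ_surjective (b i)
  have hsurj : Function.Surjective (Fintype.linearCombination A v) := by
    refine LinearMap.surjective_of_surjective_mkQ_modRad_comp _ fun q => ?_
    refine ⟨fun i => algebraMap k A (b.repr q i), ?_⟩
    simp only [LinearMap.comp_apply, Fintype.linearCombination_apply, map_sum, map_smul, hv]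
    exact b.sum_repr q
  calc kdim k A M ≤ kdim k A (Fin _ → A) := kdim_le_of_surjective k _ hsurj
    _ = Module.finrank k A * kdim k A (M ⧸ modRad A M) := by
      rw [kdim_eq_finrank, Module.finrank_pi_fintype, Fin.sum_const, smul_eq_mul, mul_comm]
      rfl

end KDim

namespace HomologicalComplex

variable {A : Type*} [Ring A] {ι : Type*} {c : ComplexShape ι}
  (K : HomologicalComplex (ModuleCat A) c)

instance finite_opcycles (i : ι) [Module.Finite A (K.X i)] : Module.Finite A (K.opcycles i) :=
  Module.Finite.of_surjective (K.pOpcycles i).hom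
    ((ModuleCat.epi_iff_surjective _).1 inferInstance)

variable (k : Type*) [Field k] [Algebra k A] [FiniteDimensional k A]

lemma kdim_quotient_modRad_le_kdim_opcycles {i j : ι} (hj : c.prev i = j)
    [Module.Finite A (K.X i)] (hmin : LinearMap.range (K.d j i).hom ≤ modRad A (K.X i)) :
    kdim k A (K.X i ⧸ modRad A (K.X i)) ≤ kdim k A (K.opcycles i) := by
  let π := K.descOpcycles (ModuleCat.ofHom (modRad A (K.X i)).mkQ) j hj (by
    ext x
    exact (Submodule.Quotient.mk_eq_zero _).2 (hmin ⟨x, rfl⟩))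
  refine kdim_le_of_surjective k π.hom fun y => ?_
  obtain ⟨x, rfl⟩ := (modRad A (K.X i)).mkQ_surjective y
  refine ⟨K.pOpcycles i x, ?_⟩
  change (K.pOpcycles i ≫ π).hom x = _
  rw [K.p_descOpcycles]
  rfl

lemma kdim_opcycles_le {i l : ι} (hl : c.next i = l)
    [Module.Finite A (K.X i)] [Module.Finite A (K.X l)] :
    kdim k A (K.opcycles i) ≤ kdim k A (K.homology i) + kdim k A (K.X l) := by
  let S := ShortComplex.mk (K.homologyι i) (K.fromOpcycles i l) (by simp)
  have hS : S.Exact := S.exact_of_f_is_kernel (K.homologyIsKernel i l hl)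
  exact kdim_le_add_of_exact k ((ModuleCat.mono_iff_injective _).1 inferInstance)
    (LinearMap.exact_iff.2 hS.moduleCat_range_eq_ker.symm)

lemma kdim_X_le {i j l : ι} (hj : c.prev i = j) (hl : c.next i = l)
    [Module.Finite A (K.X i)] [Module.Finite A (K.X l)]
    (hmin : LinearMap.range (K.d j i).hom ≤ modRad A (K.X i)) :
    kdim k A (K.X i) ≤ Module.finrank k A * (kdim k A (K.homology i) + kdim k A (K.X l)) :=
  (kdim_le_finrank_mul_kdim_quotient_modRad k).trans <| Nat.mul_le_mul_left _ <|
    (K.kdim_quotient_modRad_le_kdim_opcycles k hj hmin).trans (K.kdim_opcycles_le k hl)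

end HomologicalComplex

lemma sum_pow_Icc_one_succ (d n : ℕ) :
    ∑ j ∈ Finset.Icc 1 (n + 1), d ^ j = d * (1 + ∑ j ∈ Finset.Icc 1 n, d ^ j) := by
  induction n with
  | zero => simp
  | succ n ih =>
    rw [Finset.sum_Icc_succ_top (b := n + 1) (by omega)]
    rw [Finset.sum_Icc_succ_top (b := n) (by omega)] at ih ⊢
    linear_combination ih

lemma le_mul_sum_pow_of_le_mul_add {f : ℤ → ℕ} {c d : ℕ} {m : ℤ} (hzero : ∀ i, m < i → f i = 0)
    (hstep : ∀ i, f i ≤ d * (c + f (i + 1))) (i : ℤ) :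
    f i ≤ c * ∑ j ∈ Finset.Icc 1 (m - i + 1).toNat, d ^ j := by
  obtain ⟨n, hn⟩ : ∃ n, (m - i + 1).toNat = n := ⟨_, rfl⟩
  rw [hn]
  induction n generalizing i with
  | zero => simp [hzero i (by omega)]
  | succ n ih =>
    calc f i ≤ d * (c + f (i + 1)) := hstep i
      _ ≤ d * (c + c * ∑ j ∈ Finset.Icc 1 n, d ^ j) := by
        gcongr
        exact ih (i + 1) (by omega)
      _ = c * ∑ j ∈ Finset.Icc 1 (n + 1), d ^ j := by
        rw [sum_pow_Icc_one_succ]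
        ring

theorem stmt_2_general (k : Type*) [Field k] (A : Type*) [Ring A] [Algebra k A]
    [FiniteDimensional k A] (m : ℕ)
    (X : CochainComplex (ModuleCat A) ℤ)
    (hconc : ∀ i : ℤ, (i < 0 ∨ (m : ℤ) < i) → Subsingleton (X.X i))
    (hfg : ∀ i : ℤ, Module.Finite A (X.X i))
    (hmin : ∀ i : ℤ, LinearMap.range (X.d i (i + 1)).hom ≤ modRad A (X.X (i + 1)))
    (c : ℕ) (hc : ∀ i : ℤ, kdim k A (X.homology i) ≤ c) :
    ∀ i : ℤ, 0 ≤ i → i ≤ (m : ℤ) →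
      kdim k A (X.X i) ≤
        c * ∑ j ∈ Finset.Icc 1 ((m : ℤ) - i + 1).toNat, (Module.finrank k A) ^ j := by
  intro i _ _
  refine le_mul_sum_pow_of_le_mul_add (f := fun i => kdim k A (X.X i))
    (fun i hi => have := hconc i (.inr hi); kdim_of_subsingleton k) (fun i => ?_) i
  have hmin' := hmin (i - 1)
  rw [sub_add_cancel] at hmin'
  have := hfg i
  have := hfg (i + 1)
  exact (X.kdim_X_le k (CochainComplex.prev ℤ i) (CochainComplex.next ℤ i) hmin').trans
    (Nat.mul_le_mul_left _ (Nat.add_le_add_right (hc i) _))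

/-- Let `A` be a finite-dimensional `k`-algebra of dimension `d` and `X` a minimal
complex of finitely generated projective `A`-modules concentrated in degrees
`0,…,m` with `dim_k Hⁱ(X) ≤ c` for all `i`.  Then for each `i ∈ [0,m]`,
`dim_k Xⁱ ≤ c·(d + d² + ⋯ + d^{m−i+1})`. -/
theorem stmt_2 (k : Type*) [Field k] (A : Type*) [Ring A] [Algebra k A]
    [FiniteDimensional k A] (m : ℕ)
    (X : CochainComplex (ModuleCat A) ℤ)
    (hconc : ∀ i : ℤ, (i < 0 ∨ (m : ℤ) < i) → Subsingleton (X.X i))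
    (hfg : ∀ i : ℤ, Module.Finite A (X.X i))
    (hproj : ∀ i : ℤ, Module.Projective A (X.X i))
    (hmin : ∀ i : ℤ, LinearMap.range (X.d i (i + 1)).hom ≤ modRad A (X.X (i + 1)))
    (c : ℕ) (hc : ∀ i : ℤ, kdim k A (X.homology i) ≤ c) :
    ∀ i : ℤ, 0 ≤ i → i ≤ (m : ℤ) →
      kdim k A (X.X i) ≤
        c * ∑ j ∈ Finset.Icc 1 ((m : ℤ) - i + 1).toNat, (Module.finrank k A) ^ j :=
  stmt_2_general k A m X hconc hfg hmin c hc
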